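/- arXiv:1908.09068 — 6 statements merged into one kernel-verified Lean document; each statement's English description precedes it below -/
import Mathlib

section
/- Let H be a finite type, 𝔐 a finite family of subsets of H, L the meet-closure of 𝔐, and PEC(x) = x \ ⋃{y ∈ L : y ⊊ x} for x ∈ L. Then the family {PEC(x) : x ∈ L, PEC(x) ≠ ∅} of nonempty packet equivalence classes is a set of atomic predicates for 𝔐: every member is nonempty, the members are pairwise disjoint, their union is H, every nonempty P ∈ 𝔐 is a union of members, and the family has minimal cardinality among all families of subsets of H with these four properties. -/
/-!
Every `h : H` lies in a least member of the meet-closure, `meetHull 𝔐 h`, the intersection of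
the members of `𝔐` containing `h`, and `PEC 𝔐 x` is exactly the fibre of `meetHull 𝔐` over `x`.
So the nonempty packet equivalence classes are the classes of the relation "lies in the same
members of `𝔐`", and every member of `𝔐` is a union of them. Conversely, if a partition has every
nonempty member of `𝔐` as a union of blocks, two points of one block lie in the same members of
`𝔐`; the partition then refines the kernel of `meetHull 𝔐`, so it has at least as many blocks.
-/

open Set

/-- The meet-closure of a family `𝔐` of subsets of `H`: all intersections
`⋂₀ S` over subfamilies `S ⊆ 𝔐`, where the empty intersection is `univ`. -/
def meetClosure {H : Type*} (𝔐 : Set (Set H)) : Set (Set H) :=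
  {x | ∃ S ⊆ 𝔐, x = ⋂₀ S}

/-- The packet equivalence class of `x`: the elements of `x` not contained in
any strictly smaller element of the meet-closure of `𝔐`. -/
def PEC {H : Type*} (𝔐 : Set (Set H)) (x : Set H) : Set H :=
  x \ ⋃₀ {y ∈ meetClosure 𝔐 | y ⊂ x}


/-- `A` is a set of atomic predicates for `𝔐`: (1) every member is nonempty,
(2) the union of `A` is everything, (3) distinct members are disjoint,
(4) every nonempty `P ∈ 𝔐` is a union of members of `A`, and
(5) `A` has minimal cardinality among all families satisfying (1)–(4). -/
def IsAtomicPredicates {H : Type*} (𝔐 : Set (Set H)) (A : Set (Set H)) : Prop :=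
  (∀ a ∈ A, a.Nonempty) ∧
  ⋃₀ A = Set.univ ∧
  A.Pairwise Disjoint ∧
  (∀ P ∈ 𝔐, P.Nonempty → ∃ B ⊆ A, P = ⋃₀ B) ∧
  ∀ B₀ : Set (Set H),
    (∀ a ∈ B₀, a.Nonempty) → ⋃₀ B₀ = Set.univ → B₀.Pairwise Disjoint →
    (∀ P ∈ 𝔐, P.Nonempty → ∃ B ⊆ B₀, P = ⋃₀ B) →
    A.ncard ≤ B₀.ncard

namespace Setoid

variable {α : Type*}

theorem exists_subset_classes_eq_sUnion (r : Setoid α) {P : Set α}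
    (hP : ∀ x y, r x y → x ∈ P → y ∈ P) : ∃ B ⊆ r.classes, P = ⋃₀ B := by
  refine ⟨{c ∈ r.classes | c ⊆ P}, sep_subset _ _, Subset.antisymm ?_ ?_⟩
  · exact fun x hx => ⟨{y | r y x}, ⟨r.mem_classes x, fun y hy => hP x y (r.symm hy) hx⟩, r.refl x⟩
  · exact fun x ⟨c, ⟨_, hcP⟩, hxc⟩ => hcP hxc

theorem ncard_classes_le_of_le [Finite α] {r s : Setoid α} (h : r ≤ s) :
    s.classes.ncard ≤ r.classes.ncard := by
  rw [← Nat.card_coe_set_eq, ← Nat.card_coe_set_eq, ← Nat.card_congr s.quotientEquivClasses,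
    ← Nat.card_congr r.quotientEquivClasses]
  exact Nat.card_le_card_of_surjective (Quot.factor _ _ h) (Quot.ind fun a => ⟨Quot.mk _ a, rfl⟩)

end Setoid

section MeetHull

variable {H : Type*} (𝔐 : Set (Set H))

def meetHull (h : H) : Set H :=
  ⋂₀ {P ∈ 𝔐 | h ∈ P}

theorem mem_meetHull (h : H) : h ∈ meetHull 𝔐 h :=
  fun _ hP => hP.2

theorem meetHull_mem_meetClosure (h : H) : meetHull 𝔐 h ∈ meetClosure 𝔐 :=
  ⟨_, sep_subset _ _, rfl⟩

variable {𝔐}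

theorem meetHull_subset {x : Set H} (hx : x ∈ meetClosure 𝔐) {h : H} (hh : h ∈ x) :
    meetHull 𝔐 h ⊆ x := by
  obtain ⟨S, hS, rfl⟩ := hx
  exact sInter_subset_sInter fun P hP => ⟨hS hP, hh P hP⟩

theorem mem_meetClosure_of_mem {P : Set H} (hP : P ∈ 𝔐) : P ∈ meetClosure 𝔐 :=
  ⟨{P}, singleton_subset_iff.2 hP, (sInter_singleton P).symm⟩

theorem mem_of_meetHull_eq {P : Set H} (hP : P ∈ 𝔐) {x y : H} (hxy : meetHull 𝔐 x = meetHull 𝔐 y)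
    (hx : x ∈ P) : y ∈ P :=
  (hxy ▸ meetHull_subset (mem_meetClosure_of_mem hP) hx : meetHull 𝔐 y ⊆ P) (mem_meetHull 𝔐 y)

theorem meetHull_eq_of_forall_mem_iff {x y : H} (h : ∀ P ∈ 𝔐, x ∈ P ↔ y ∈ P) :
    meetHull 𝔐 x = meetHull 𝔐 y := by
  unfold meetHull
  congr 1
  ext P
  exact and_congr_right (h P)

theorem PEC_eq_setOf_meetHull_eq {x : Set H} (hx : x ∈ meetClosure 𝔐) :
    PEC 𝔐 x = {h | meetHull 𝔐 h = x} := by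
  ext h
  constructor
  · rintro ⟨hhx, hmin⟩
    by_contra hne
    exact hmin ⟨meetHull 𝔐 h,
      ⟨meetHull_mem_meetClosure 𝔐 h, (meetHull_subset hx hhx).ssubset_of_ne hne⟩, mem_meetHull 𝔐 h⟩
  · rintro rfl
    refine ⟨mem_meetHull 𝔐 h, ?_⟩
    rintro ⟨y, ⟨hy, hyx⟩, hhy⟩
    exact hyx.not_subset (meetHull_subset hy hhy)

theorem setOf_nonempty_PEC_eq_classes_ker :
    {s : Set H | s.Nonempty ∧ ∃ x ∈ meetClosure 𝔐, s = PEC 𝔐 x} =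
      (Setoid.ker (meetHull 𝔐)).classes := by
  ext s
  constructor
  · rintro ⟨⟨h, hh⟩, x, hx, rfl⟩
    rw [PEC_eq_setOf_meetHull_eq hx] at hh ⊢
    exact ⟨h, by rw [← hh]; rfl⟩
  · rintro ⟨h, rfl⟩
    refine ⟨⟨h, rfl⟩, meetHull 𝔐 h, meetHull_mem_meetClosure 𝔐 h, ?_⟩
    rw [PEC_eq_setOf_meetHull_eq (meetHull_mem_meetClosure 𝔐 h)]
    rfl

theorem mkClasses_le_ker_meetHull {B₀ : Set (Set H)} (hB₀ : Setoid.IsPartition B₀)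
    (hrep : ∀ P ∈ 𝔐, P.Nonempty → ∃ B ⊆ B₀, P = ⋃₀ B) :
    Setoid.mkClasses B₀ hB₀.2 ≤ Setoid.ker (meetHull 𝔐) := by
  have mem_of_rel : ∀ x y, (∀ b ∈ B₀, x ∈ b → y ∈ b) → ∀ P ∈ 𝔐, x ∈ P → y ∈ P := by
    intro x y hxy P hP hx
    obtain ⟨B, hB, rfl⟩ := hrep P hP ⟨x, hx⟩
    obtain ⟨b, hbB, hxb⟩ := hx
    exact ⟨b, hbB, hxy b (hB hbB) hxb⟩
  intro x y hxy
  exact meetHull_eq_of_forall_mem_iff fun P hP =>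
    ⟨mem_of_rel x y hxy P hP, mem_of_rel y x ((Setoid.mkClasses B₀ hB₀.2).symm hxy) P hP⟩

end MeetHull

/-- The family of nonempty packet equivalence classes forms the set of
atomic predicates for `𝔐`. -/
theorem nonempty_pecs_isAtomicPredicates {H : Type*} [Fintype H] (𝔐 : Set (Set H)) :
    IsAtomicPredicates 𝔐
      {s : Set H | s.Nonempty ∧ ∃ x ∈ meetClosure 𝔐, s = PEC 𝔐 x} := by
  rw [setOf_nonempty_PEC_eq_classes_ker]
  have hpart := Setoid.isPartition_classes (Setoid.ker (meetHull 𝔐))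
  refine ⟨fun s => Setoid.nonempty_of_mem_partition hpart, hpart.sUnion_eq_univ,
    hpart.pairwiseDisjoint, fun P hP _ => Setoid.exists_subset_classes_eq_sUnion _
      fun _ _ hxy => mem_of_meetHull_eq hP hxy, ?_⟩
  intro B₀ hne hcover hdisj hrep
  have hB₀ : Setoid.IsPartition B₀ :=
    Set.PairwiseDisjoint.isPartition_of_exists_of_ne_empty hdisj
      (fun h => mem_sUnion.1 (hcover ▸ mem_univ h)) fun h => (hne ∅ h).ne_empty rfl
  rw [← Setoid.classes_mkClasses B₀ hB₀]
  exact Setoid.ncard_classes_le_of_le (mkClasses_le_ker_meetHull hB₀ hrep)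
end

section
/- Let H be a finite type, 𝔐 a finite family of subsets of H, and L its meet-closure. For every x ∈ L, x equals the union of PEC(y) over those y ∈ L with y ⊆ x. In particular, taking x = H, the packet equivalence classes cover H. -/
/-! Every `h` lies in the PEC of the least element of the meet-closure containing it, namely
the intersection of all members of `𝔐` containing `h`: a strictly smaller lattice element
containing `h` would contradict leastness. -/

open Set

namespace meetClosure

variable {H : Type*} (𝔐 : Set (Set H))

def hull (h : H) : Set H :=
  ⋂₀ {P ∈ 𝔐 | h ∈ P}

theorem hull_mem (h : H) : hull 𝔐 h ∈ meetClosure 𝔐 :=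
  ⟨_, fun _ hP => hP.1, rfl⟩

theorem mem_hull (h : H) : h ∈ hull 𝔐 h :=
  fun _ hP => hP.2

variable {𝔐}

theorem hull_subset {x : Set H} (hx : x ∈ meetClosure 𝔐) {h : H} (hh : h ∈ x) :
    hull 𝔐 h ⊆ x := by
  obtain ⟨S, hS, rfl⟩ := hx
  exact fun a ha P hP => ha P ⟨hS hP, hh P hP⟩

theorem mem_PEC_hull (h : H) : h ∈ PEC 𝔐 (hull 𝔐 h) := by
  refine ⟨mem_hull 𝔐 h, ?_⟩
  rintro ⟨y, ⟨hy, hy_ssubset⟩, hhy⟩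
  exact hy_ssubset.2 (hull_subset hy hhy)

theorem exists_subset_mem_PEC {x : Set H} (hx : x ∈ meetClosure 𝔐) {h : H} (hh : h ∈ x) :
    ∃ y ∈ meetClosure 𝔐, y ⊆ x ∧ h ∈ PEC 𝔐 y :=
  ⟨hull 𝔐 h, hull_mem 𝔐 h, hull_subset hx hh, mem_PEC_hull h⟩

end meetClosure

theorem lattice_elem_eq_sUnion_pecs_general {H : Type*} (𝔐 : Set (Set H)) :
    (∀ x ∈ meetClosure 𝔐,
      x = ⋃₀ {s : Set H | ∃ y ∈ meetClosure 𝔐, y ⊆ x ∧ s = PEC 𝔐 y}) ∧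
    ⋃₀ {s : Set H | ∃ y ∈ meetClosure 𝔐, s = PEC 𝔐 y} = Set.univ := by
  refine ⟨fun x hx => Subset.antisymm ?_ ?_, eq_univ_of_forall fun h => ?_⟩
  · intro h hh
    obtain ⟨y, hy, hyx, hhy⟩ := meetClosure.exists_subset_mem_PEC hx hh
    exact ⟨PEC 𝔐 y, ⟨y, hy, hyx, rfl⟩, hhy⟩
  · rintro h ⟨_, ⟨y, -, hyx, rfl⟩, hhy⟩
    exact hyx (sdiff_subset hhy)
  · exact ⟨_, ⟨_, meetClosure.hull_mem 𝔐 h, rfl⟩, meetClosure.mem_PEC_hull h⟩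

/-- Every element of the meet-closure is the union of the packet equivalence
classes of the lattice elements below it; in particular (taking `x = univ`)
the packet equivalence classes cover `H`. -/
theorem lattice_elem_eq_sUnion_pecs {H : Type*} [Fintype H] (𝔐 : Set (Set H)) :
    (∀ x ∈ meetClosure 𝔐,
      x = ⋃₀ {s : Set H | ∃ y ∈ meetClosure 𝔐, y ⊆ x ∧ s = PEC 𝔐 y}) ∧
    ⋃₀ {s : Set H | ∃ y ∈ meetClosure 𝔐, s = PEC 𝔐 y} = Set.univ :=
  lattice_elem_eq_sUnion_pecs_general 𝔐
end

section
/- Let H be a finite type, 𝔐 a finite family of subsets of H, and L its meet-closure. For every x ∈ L, PEC(x) = (⋂{P ∈ 𝔐 : x ⊆ P}) \ (⋃{P ∈ 𝔐 : ¬(x ⊆ P)}), where the intersection over the empty collection is H. -/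
/-
An element `x = ⋂₀ S` of the meet-closure is the intersection of all match conditions containing
it, which gives the first half. For the second, a packet of `x` lies in some strictly smaller
element `⋂₀ T` of the meet-closure iff it lies in some match condition `P ⊉ x`: if `⋂₀ T ⊂ x`,
some `P ∈ T` must fail to contain `x`; conversely `x ∩ P` is itself in the meet-closure and
strictly below `x`.
-/

open Set

namespace meetClosure

variable {H : Type*} {𝔐 : Set (Set H)} {x : Set H}

theorem inter_mem (hx : x ∈ meetClosure 𝔐) {P : Set H} (hP : P ∈ 𝔐) :
    x ∩ P ∈ meetClosure 𝔐 := by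
  obtain ⟨S, hS, rfl⟩ := hx
  exact ⟨insert P S, insert_subset hP hS, by rw [sInter_insert, inter_comm]⟩

theorem sInter_supersets_eq (hx : x ∈ meetClosure 𝔐) : ⋂₀ {P ∈ 𝔐 | x ⊆ P} = x := by
  obtain ⟨S, hS, rfl⟩ := hx
  refine Subset.antisymm (fun h hh P hP => hh P ⟨hS hP, sInter_subset_of_mem hP⟩) ?_
  exact subset_sInter fun P hP => hP.2

theorem exists_mem_superset_of_not_subset {y : Set H} (hy : y ∈ meetClosure 𝔐) (hxy : ¬x ⊆ y) :
    ∃ P ∈ 𝔐, y ⊆ P ∧ ¬x ⊆ P := by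
  obtain ⟨T, hT, rfl⟩ := hy
  by_contra! hT_supersets
  exact hxy <| subset_sInter fun P hP =>
    hT_supersets P (hT hP) (sInter_subset_of_mem hP)

theorem inter_sUnion_ssubset_eq (hx : x ∈ meetClosure 𝔐) :
    x ∩ ⋃₀ {y ∈ meetClosure 𝔐 | y ⊂ x} = x ∩ ⋃₀ {P ∈ 𝔐 | ¬x ⊆ P} := by
  ext h
  simp only [mem_inter_iff, mem_sUnion, mem_ofPred_eq, and_congr_right_iff]
  intro hhx
  constructor
  · rintro ⟨y, ⟨hy, hyx⟩, hhy⟩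
    obtain ⟨P, hP, hyP, hxP⟩ := exists_mem_superset_of_not_subset hy hyx.not_subset
    exact ⟨P, ⟨hP, hxP⟩, hyP hhy⟩
  · rintro ⟨P, ⟨hP, hxP⟩, hhP⟩
    exact ⟨x ∩ P, ⟨inter_mem hx hP, inter_ssubset_left_iff.2 hxP⟩, hhx, hhP⟩

end meetClosure

theorem pec_eq_sInter_diff_sUnion_general {H : Type*} (𝔐 : Set (Set H)) :
    ∀ x ∈ meetClosure 𝔐,
      PEC 𝔐 x = ⋂₀ {P ∈ 𝔐 | x ⊆ P} \ ⋃₀ {P ∈ 𝔐 | ¬ x ⊆ P} := by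
  intro x hx
  rw [meetClosure.sInter_supersets_eq hx, PEC, ← sdiff_self_inter,
    meetClosure.inter_sUnion_ssubset_eq hx, sdiff_self_inter]

/-- `PEC x` is the intersection of the match conditions containing `x` minus
the union of the match conditions not containing `x`. -/
theorem pec_eq_sInter_diff_sUnion {H : Type*} [Fintype H] (𝔐 : Set (Set H)) :
    ∀ x ∈ meetClosure 𝔐,
      PEC 𝔐 x = ⋂₀ {P ∈ 𝔐 | x ⊆ P} \ ⋃₀ {P ∈ 𝔐 | ¬ x ⊆ P} :=
  pec_eq_sInter_diff_sUnion_general 𝔐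
end

section
/- Let H be a finite type, 𝔐 a finite family of subsets of H, and L its meet-closure. If p ∈ PEC(x) for some x ∈ L, then PEC(x) equals the cell of p with respect to 𝔐. -/
open Set

/-- The cell of a point `p` with respect to `𝔐`: all points lying in exactly
the same members of `𝔐` as `p`. -/
def cell {H : Type*} (𝔐 : Set (Set H)) (p : H) : Set H :=
  {q | ∀ P ∈ 𝔐, q ∈ P ↔ p ∈ P}

/-! A point of `PEC 𝔐 x` lies in a member `P` of `𝔐` only if all of `x` does, since otherwise
`x ∩ P` is a strictly smaller element of the meet-closure containing it. So two points of
`PEC 𝔐 x` lie in the same members of `𝔐`. Conversely, membership in an element of the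
meet-closure only depends on the cell of a point, hence so does membership in `PEC 𝔐 x`. -/

section

variable {H : Type*} {𝔐 : Set (Set H)} {x P : Set H} {p q : H}

theorem inter_mem_meetClosure (hx : x ∈ meetClosure 𝔐) (hP : P ∈ 𝔐) : x ∩ P ∈ meetClosure 𝔐 := by
  obtain ⟨S, hS, rfl⟩ := hx
  exact ⟨insert P S, insert_subset hP hS, by rw [sInter_insert, inter_comm]⟩

theorem mem_iff_mem_of_mem_cell (hx : x ∈ meetClosure 𝔐) (hq : q ∈ cell 𝔐 p) : q ∈ x ↔ p ∈ x := by
  obtain ⟨S, hS, rfl⟩ := hx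
  simp only [mem_sInter]
  exact forall₂_congr fun P hP => hq P (hS hP)

theorem subset_of_mem_PEC (hx : x ∈ meetClosure 𝔐) (hp : p ∈ PEC 𝔐 x) (hP : P ∈ 𝔐)
    (hpP : p ∈ P) : x ⊆ P := by
  by_contra hxP
  have hssub : x ∩ P ⊂ x := ⟨inter_subset_left, fun h => hxP fun _ hq => (h hq).2⟩
  exact hp.2 ⟨x ∩ P, ⟨inter_mem_meetClosure hx hP, hssub⟩, hp.1, hpP⟩

theorem mem_cell_of_mem_PEC (hx : x ∈ meetClosure 𝔐) (hp : p ∈ PEC 𝔐 x) (hq : q ∈ PEC 𝔐 x) :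
    q ∈ cell 𝔐 p := fun _ hP =>
  ⟨fun hqP => subset_of_mem_PEC hx hq hP hqP hp.1,
    fun hpP => subset_of_mem_PEC hx hp hP hpP hq.1⟩

theorem mem_PEC_of_mem_cell (hx : x ∈ meetClosure 𝔐) (hp : p ∈ PEC 𝔐 x) (hq : q ∈ cell 𝔐 p) :
    q ∈ PEC 𝔐 x := by
  refine ⟨(mem_iff_mem_of_mem_cell hx hq).2 hp.1, ?_⟩
  rintro ⟨y, ⟨hy, hyx⟩, hqy⟩
  exact hp.2 ⟨y, ⟨hy, hyx⟩, (mem_iff_mem_of_mem_cell hy hq).1 hqy⟩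

end

theorem pec_eq_cell_of_mem_general {H : Type*} (𝔐 : Set (Set H))
    (x : Set H) (hx : x ∈ meetClosure 𝔐) (p : H) (hp : p ∈ PEC 𝔐 x) :
    PEC 𝔐 x = cell 𝔐 p :=
  Set.ext fun _ => ⟨mem_cell_of_mem_PEC hx hp, mem_PEC_of_mem_cell hx hp⟩

/-- If `p` lies in the packet equivalence class of some lattice element `x`,
then that packet equivalence class is exactly the cell of `p`. -/
theorem pec_eq_cell_of_mem {H : Type*} [Fintype H] (𝔐 : Set (Set H))
    (x : Set H) (hx : x ∈ meetClosure 𝔐) (p : H) (hp : p ∈ PEC 𝔐 x) :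
    PEC 𝔐 x = cell 𝔐 p :=
  pec_eq_cell_of_mem_general 𝔐 x hx p hp
end

section
/- Let H be a finite type, 𝔐 a finite family of subsets of H, and L its meet-closure. For every p ∈ H, let x_p := ⋂{P ∈ 𝔐 : p ∈ P} (with the empty intersection equal to H). Then x_p ∈ L and the cell of p with respect to 𝔐 equals PEC(x_p). Consequently, the collection of nonempty packet equivalence classes {PEC(x) : x ∈ L, PEC(x) ≠ ∅} equals the collection of cells of 𝔐. -/
open Set

/-! The point is that `x_p := ⋂₀ {P ∈ 𝔐 | p ∈ P}` is the least element of the meet-closure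
containing `p`. Hence `q` lies in `PEC 𝔐 x` for a lattice element `x` exactly when `x_q = x`,
and `q` lies in the cell of `p` exactly when `x_q = x_p`; comparing the two descriptions gives
`cell 𝔐 p = PEC 𝔐 x_p`, and every nonempty `PEC 𝔐 x` is `PEC 𝔐 x_p` for any of its points `p`. -/

section

variable {H : Type*} {𝔐 : Set (Set H)}

theorem sInter_setOf_mem_mem_meetClosure (p : H) : ⋂₀ {P ∈ 𝔐 | p ∈ P} ∈ meetClosure 𝔐 :=
  ⟨_, fun _ hP => hP.1, rfl⟩

theorem mem_sInter_setOf_mem (p : H) : p ∈ ⋂₀ {P ∈ 𝔐 | p ∈ P} :=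
  fun _ hP => hP.2

theorem sInter_setOf_mem_subset {x : Set H} {p : H} (hx : x ∈ meetClosure 𝔐) (hp : p ∈ x) :
    ⋂₀ {P ∈ 𝔐 | p ∈ P} ⊆ x := by
  obtain ⟨S, hS, rfl⟩ := hx
  exact fun q hq P hP => hq P ⟨hS hP, hp P hP⟩

theorem mem_PEC_iff_sInter_eq {x : Set H} {q : H} (hx : x ∈ meetClosure 𝔐) :
    q ∈ PEC 𝔐 x ↔ ⋂₀ {P ∈ 𝔐 | q ∈ P} = x := by
  constructor
  · rintro ⟨hqx, hq⟩
    have hsub := sInter_setOf_mem_subset hx hqx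
    by_contra hne
    exact hq ⟨_, ⟨sInter_setOf_mem_mem_meetClosure q, hsub.ssubset_of_ne hne⟩,
      mem_sInter_setOf_mem q⟩
  · rintro rfl
    refine ⟨mem_sInter_setOf_mem q, ?_⟩
    rintro ⟨y, ⟨hy, hyx⟩, hqy⟩
    exact hyx.not_subset (sInter_setOf_mem_subset hy hqy)

theorem mem_cell_iff_sInter_eq {p q : H} :
    q ∈ cell 𝔐 p ↔ ⋂₀ {P ∈ 𝔐 | q ∈ P} = ⋂₀ {P ∈ 𝔐 | p ∈ P} := by
  constructor
  · intro hq
    congr 1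
    ext P
    exact and_congr_right (hq P)
  · intro h P hP
    constructor
    · intro hqP
      exact (h ▸ mem_sInter_setOf_mem p) P ⟨hP, hqP⟩
    · intro hpP
      exact (h.symm ▸ mem_sInter_setOf_mem q) P ⟨hP, hpP⟩

theorem mem_cell_self (p : H) : p ∈ cell 𝔐 p :=
  fun _ _ => Iff.rfl

theorem cell_eq_PEC_sInter (p : H) : cell 𝔐 p = PEC 𝔐 (⋂₀ {P ∈ 𝔐 | p ∈ P}) := by
  ext q
  rw [mem_cell_iff_sInter_eq, mem_PEC_iff_sInter_eq (sInter_setOf_mem_mem_meetClosure _)]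

end

theorem cells_eq_nonempty_pecs_general {H : Type*} (𝔐 : Set (Set H)) :
    (∀ p : H, ⋂₀ {P ∈ 𝔐 | p ∈ P} ∈ meetClosure 𝔐 ∧
      cell 𝔐 p = PEC 𝔐 (⋂₀ {P ∈ 𝔐 | p ∈ P})) ∧
    {s : Set H | s.Nonempty ∧ ∃ x ∈ meetClosure 𝔐, s = PEC 𝔐 x} =
      {s : Set H | ∃ p : H, s = cell 𝔐 p} := by
  refine ⟨fun p => ⟨sInter_setOf_mem_mem_meetClosure _, cell_eq_PEC_sInter p⟩, ?_⟩
  ext s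
  constructor
  · rintro ⟨⟨p, hp⟩, x, hx, rfl⟩
    refine ⟨p, ?_⟩
    rw [cell_eq_PEC_sInter, (mem_PEC_iff_sInter_eq hx).1 hp]
  · rintro ⟨p, rfl⟩
    exact ⟨⟨p, mem_cell_self p⟩, _, sInter_setOf_mem_mem_meetClosure _, cell_eq_PEC_sInter p⟩

/-- For every point `p`, the intersection `x_p` of the match conditions
containing `p` is a lattice element whose packet equivalence class is the cell
of `p`; consequently the nonempty packet equivalence classes are exactly the
cells of `𝔐`. -/
theorem cells_eq_nonempty_pecs {H : Type*} [Fintype H] (𝔐 : Set (Set H)) :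
    (∀ p : H, ⋂₀ {P ∈ 𝔐 | p ∈ P} ∈ meetClosure 𝔐 ∧
      cell 𝔐 p = PEC 𝔐 (⋂₀ {P ∈ 𝔐 | p ∈ P})) ∧
    {s : Set H | s.Nonempty ∧ ∃ x ∈ meetClosure 𝔐, s = PEC 𝔐 x} =
      {s : Set H | ∃ p : H, s = cell 𝔐 p} :=
  cells_eq_nonempty_pecs_general 𝔐
end

section
/- Let H be a finite type, 𝔐 a finite family of subsets of H, and A a family of subsets of H such that every member of A is nonempty, distinct members of A are disjoint, the union of A is H, and every nonempty P ∈ 𝔐 is a union of members of A. Then the cardinality of A is at least the number of cells of 𝔐. -/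
/-!
Every block `a ∈ A` lies inside a single cell: if `p ∈ a` lies in a nonempty `P = ⋃₀ B` with
`B ⊆ A`, then the member of `B` containing `p` must be `a` by disjointness, so all of `a` lies
in `P`. Hence, sending each point to the block containing it, the cell map factors through a map
`H → A`, and there are at most as many cells as blocks.
-/

open Set

theorem Set.ncard_range_le_of_factorsThrough {α β γ : Type*} {f : α → β} {g : α → γ}
    (hg : g.FactorsThrough f) (hf : (range f).Finite) : (range g).ncard ≤ (range f).ncard := by
  rcases isEmpty_or_nonempty α with hα | ⟨⟨a⟩⟩
  · simp [range_eq_empty]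
  · rw [← hg.extend_comp fun _ => g a, range_comp]
    exact ncard_image_le hf

section Refinement

variable {H : Type*} {𝔐 A : Set (Set H)} {a P : Set H} {p q : H}

theorem mem_of_mem_of_mem_block (hA : A.Pairwise Disjoint)
    (h𝔐 : ∀ P ∈ 𝔐, P.Nonempty → ∃ B ⊆ A, P = ⋃₀ B)
    (ha : a ∈ A) (hp : p ∈ a) (hq : q ∈ a) (hP : P ∈ 𝔐) (hpP : p ∈ P) : q ∈ P := by
  obtain ⟨B, hBA, rfl⟩ := h𝔐 P hP ⟨p, hpP⟩
  obtain ⟨b, hb, hpb⟩ := hpP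
  obtain rfl : b = a := PairwiseDisjoint.elim_set (f := id) hA (hBA hb) ha p hpb hp
  exact ⟨b, hb, hq⟩

theorem cell_eq_cell_of_mem_block (hA : A.Pairwise Disjoint)
    (h𝔐 : ∀ P ∈ 𝔐, P.Nonempty → ∃ B ⊆ A, P = ⋃₀ B)
    (ha : a ∈ A) (hp : p ∈ a) (hq : q ∈ a) : cell 𝔐 p = cell 𝔐 q :=
  ext fun _ => forall₂_congr fun _ hP => iff_congr Iff.rfl
    ⟨mem_of_mem_of_mem_block hA h𝔐 ha hp hq hP, mem_of_mem_of_mem_block hA h𝔐 ha hq hp hP⟩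

end Refinement

theorem cells_ncard_le_general {H : Type*} [Fintype H]
    (𝔐 : Set (Set H)) (A : Set (Set H))
    (h2 : ⋃₀ A = Set.univ)
    (h3 : A.Pairwise Disjoint)
    (h4 : ∀ P ∈ 𝔐, P.Nonempty → ∃ B ⊆ A, P = ⋃₀ B) :
    {s : Set H | ∃ p : H, s = cell 𝔐 p}.ncard ≤ A.ncard := by
  choose block hblockA hmem_block using fun p => mem_sUnion.mp (h2 ▸ mem_univ p)
  have hfactors : (cell 𝔐).FactorsThrough block := fun p q hpq =>
    cell_eq_cell_of_mem_block h3 h4 (hblockA p) (hmem_block p) (hpq ▸ hmem_block q)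
  have hcells : {s : Set H | ∃ p : H, s = cell 𝔐 p} = range (cell 𝔐) :=
    ext fun _ => exists_congr fun _ => eq_comm
  calc {s : Set H | ∃ p : H, s = cell 𝔐 p}.ncard
      = (range (cell 𝔐)).ncard := by rw [hcells]
    _ ≤ (range block).ncard := ncard_range_le_of_factorsThrough hfactors (toFinite _)
    _ ≤ A.ncard := ncard_le_ncard (range_subset_iff.2 hblockA)

/-- Any family of nonempty, pairwise-disjoint sets covering `H` such that every
nonempty `P ∈ 𝔐` is a union of members has at least as many members as there
are cells of `𝔐`. -/
theorem cells_ncard_le {H : Type*} [Fintype H]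
    (𝔐 : Set (Set H)) (A : Set (Set H))
    (h1 : ∀ a ∈ A, a.Nonempty)
    (h2 : ⋃₀ A = Set.univ)
    (h3 : A.Pairwise Disjoint)
    (h4 : ∀ P ∈ 𝔐, P.Nonempty → ∃ B ⊆ A, P = ⋃₀ B) :
    {s : Set H | ∃ p : H, s = cell 𝔐 p}.ncard ≤ A.ncard :=
  cells_ncard_le_general 𝔐 A h2 h3 h4
end
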